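/- The map Z_N : 𝔥^1 → ℚ sending e_𝐤 to the multiple harmonic sum ζ_{<N}(𝐤) (and 1 to 1) is an algebra homomorphism with respect to the harmonic (stuffle) product: Z_N(w * w') = Z_N(w)·Z_N(w') for all w, w' ∈ 𝔥^1. -/

import Mathlib

open Finset

open scoped Classical

/-- Auxiliary front-recursion for the harmonic (stuffle) product on reversed words. -/
noncomputable def stR : List ℕ → List ℕ → (List ℕ →₀ ℚ)
  | [], w => Finsupp.single w 1
  | a :: w, [] => Finsupp.single (a :: w) 1
  | a :: w, b :: w' =>
      (stR w (b :: w')).mapDomain (List.cons a)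
    + (stR (a :: w) w').mapDomain (List.cons b)
    + (stR w w').mapDomain (List.cons (a + b))
termination_by w w' => w.length + w'.length
decreasing_by all_goals (simp; try omega)

/-- The harmonic product `e_𝐤 * e_𝐥` of two words of `𝔥¹`, encoded by their indices:
it satisfies `w e_{k₁} * w' e_{k₂} = (w * w' e_{k₂}) e_{k₁} + (w e_{k₁} * w') e_{k₂}
+ (w * w') e_{k₁+k₂}` and `w * 1 = 1 * w = w`. -/
noncomputable def harmW (w w' : List ℕ) : List ℕ →₀ ℚ :=
  (stR w.reverse w'.reverse).mapDomain List.reverse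

/-- ℚ-bilinear extension of the harmonic product to `𝔥¹`. -/
noncomputable def harmLin (f g : List ℕ →₀ ℚ) : List ℕ →₀ ℚ :=
  f.sum fun w q => g.sum fun w' q' => (q * q') • harmW w w'

/-- Auxiliary front-recursion for the shuffle product on reversed words over `{e₀,e₁}`. -/
noncomputable def shR : List Bool → List Bool → (List Bool →₀ ℚ)
  | [], w => Finsupp.single w 1
  | a :: w, [] => Finsupp.single (a :: w) 1
  | a :: w, b :: w' =>
      (shR w (b :: w')).mapDomain (List.cons a)
    + (shR (a :: w) w').mapDomain (List.cons b)
termination_by w w' => w.length + w'.length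
decreasing_by all_goals (simp; try omega)

/-- The shuffle product of two words over `{e₀,e₁}` (`true` = `e₁`): it satisfies
`w u₁ ⧢ w' u₂ = (w ⧢ w' u₂) u₁ + (w u₁ ⧢ w') u₂` and `w ⧢ 1 = 1 ⧢ w = w`. -/
noncomputable def shW (w w' : List Bool) : List Bool →₀ ℚ :=
  (shR w.reverse w'.reverse).mapDomain List.reverse

/-- The word `e_𝐤 ∈ {e₀,e₁}^*` attached to an index `𝐤` (`true` = `e₁`). -/
def wordOf (k : List ℕ) : List Bool :=
  k.flatMap (fun j => true :: List.replicate (j - 1) false)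

/-- Decode a word of `𝔥¹` back into its index. -/
def decode (w : List Bool) : List ℕ :=
  (w.foldr (fun b p => if b then (0, (p.1 + 1) :: p.2) else (p.1 + 1, p.2))
    ((0, []) : ℕ × List ℕ)).2

/-- The shuffle product on `𝔥¹`, expressed in the index encoding, extended ℚ-bilinearly. -/
noncomputable def shIdxLin (f g : List ℕ →₀ ℚ) : List ℕ →₀ ℚ :=
  f.sum fun w q => g.sum fun w' q' =>
    (q * q') • ((shW (wordOf w) (wordOf w')).mapDomain decode)

/-- The multiple harmonic sum `ζ_{<N}(𝐤)`. -/
noncomputable def MHS (N : ℕ) (k : List ℕ) : ℝ :=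
  ∑ n ∈ Finset.univ.filter
      (fun n : Fin k.length → Fin N => (∀ i, 0 < (n i : ℕ)) ∧ StrictMono n),
    ∏ i, (1 : ℝ) / (n i : ℕ) ^ k.get i

/-- `Z_N : 𝔥¹ → ℝ`, the ℚ-linear map with `Z_N(e_𝐤) = ζ_{<N}(𝐤)`, `Z_N(1) = 1`. -/
noncomputable def ZN (N : ℕ) (f : List ℕ →₀ ℚ) : ℝ :=
  f.sum fun k q => (q : ℝ) * MHS N k

/-- `f ∈ 𝔥¹`: every word in the support is an index (all entries positive). -/
def MemH1 (f : List ℕ →₀ ℚ) : Prop := ∀ w ∈ f.support, ∀ x ∈ w, 0 < x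

/-- `f ∈ 𝔥⁰`: every word in the support is an admissible index. -/
def MemH0 (f : List ℕ →₀ ℚ) : Prop :=
  ∀ w ∈ f.support, (∀ x ∈ w, 0 < x) ∧ ∀ x, w.getLast? = some x → 2 ≤ x

noncomputable def S : List ℕ → ℕ → ℝ
  | [], _ => 1
  | a :: w, N => ∑ n ∈ Finset.Ico 1 N, (1 / (n:ℝ)^a) * S w n

@[simp] lemma S_nil (N : ℕ) : S [] N = 1 := rfl
lemma S_cons (a : ℕ) (w : List ℕ) (N : ℕ) :
    S (a :: w) N = ∑ n ∈ Finset.Ico 1 N, (1 / (n:ℝ)^a) * S w n := rfl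

noncomputable def ZR (N : ℕ) (h : List ℕ →₀ ℚ) : ℝ := h.sum fun w q => (q:ℝ) * S w N

lemma ZR_add (N : ℕ) (h₁ h₂ : List ℕ →₀ ℚ) : ZR N (h₁ + h₂) = ZR N h₁ + ZR N h₂ := by
  unfold ZR
  rw [Finsupp.sum_add_index']
  · intro w; simp
  · intro w q q'; push_cast; ring

lemma ZR_mapDomain (N a : ℕ) (h : List ℕ →₀ ℚ) :
    ZR N (h.mapDomain (List.cons a)) = ∑ n ∈ Finset.Ico 1 N, (1 / (n:ℝ)^a) * ZR n h := by
  unfold ZR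
  rw [Finsupp.sum_mapDomain_index_inj (List.cons_injective)]
  rw [Finsupp.sum]
  simp only [S_cons, Finset.mul_sum, Finsupp.sum, Finset.mul_sum]
  rw [Finset.sum_comm]
  apply Finset.sum_congr rfl
  intro n _
  apply Finset.sum_congr rfl
  intro w _
  ring

lemma key_id (a b : ℕ) (u v : List ℕ) (N : ℕ) :
    (∑ n ∈ Finset.Ico 1 N, (1 / (n:ℝ)^a) * (S u n * S (b::v) n))
  + (∑ n ∈ Finset.Ico 1 N, (1 / (n:ℝ)^b) * (S (a::u) n * S v n))
  + (∑ n ∈ Finset.Ico 1 N, (1 / (n:ℝ)^(a+b)) * (S u n * S v n))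
  = S (a::u) N * S (b::v) N := by
  induction N with
  | zero => simp [S_cons]
  | succ N ih =>
    rcases Nat.eq_zero_or_pos N with h | h
    · subst h; simp [S_cons]
    rw [Finset.sum_Ico_succ_top h, Finset.sum_Ico_succ_top h, Finset.sum_Ico_succ_top h,
      S_cons a u (N+1), S_cons b v (N+1), Finset.sum_Ico_succ_top h, Finset.sum_Ico_succ_top h,
      ← S_cons a u N, ← S_cons b v N]
    have hp : (1 : ℝ) / (N:ℝ)^(a+b) = (1 / (N:ℝ)^a) * (1 / (N:ℝ)^b) := by
      rw [pow_add]; rw [one_div, one_div, one_div, mul_inv]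
    rw [hp]
    linear_combination ih

lemma main_lem : ∀ (n : ℕ) (u v : List ℕ), u.length + v.length ≤ n →
    ∀ N, ZR N (stR u v) = S u N * S v N := by
  intro n
  induction n with
  | zero =>
    intro u v hl N
    match u, v with
    | [], v => simp [stR, ZR, Finsupp.sum_single_index]
    | a :: u, v => exact absurd hl (by simp)
  | succ n ih =>
    intro u v hl N
    match u, v with
    | [], v => simp [stR, ZR, Finsupp.sum_single_index]
    | a :: u, [] => simp [stR, ZR, Finsupp.sum_single_index]
    | a :: u, b :: v =>
      rw [stR, ZR_add, ZR_add, ZR_mapDomain, ZR_mapDomain, ZR_mapDomain]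
      simp only [List.length_cons] at hl
      have h1 : u.length + (b :: v).length ≤ n := by simp; omega
      have h2 : (a :: u).length + v.length ≤ n := by simp; omega
      have h3 : u.length + v.length ≤ n := by omega
      rw [Finset.sum_congr rfl (fun m _ => by rw [ih _ _ h1] :
            ∀ m ∈ Finset.Ico 1 N, (1/(m:ℝ)^a) * ZR m (stR u (b::v))
              = (1/(m:ℝ)^a) * (S u m * S (b::v) m)),
          Finset.sum_congr rfl (fun m _ => by rw [ih _ _ h2] :
            ∀ m ∈ Finset.Ico 1 N, (1/(m:ℝ)^b) * ZR m (stR (a::u) v)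
              = (1/(m:ℝ)^b) * (S (a::u) m * S v m)),
          Finset.sum_congr rfl (fun m _ => by rw [ih _ _ h3] :
            ∀ m ∈ Finset.Ico 1 N, (1/(m:ℝ)^(a+b)) * ZR m (stR u v)
              = (1/(m:ℝ)^(a+b)) * (S u m * S v m))]
      exact key_id a b u v N

noncomputable def MHS' (N r : ℕ) (κ : Fin r → ℕ) : ℝ :=
  ∑ n ∈ Finset.univ.filter
      (fun n : Fin r → Fin N => (∀ i, 0 < (n i : ℕ)) ∧ StrictMono n),
    ∏ i, (1 : ℝ) / (n i : ℕ) ^ κ i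

lemma MHS_eq_MHS' (N : ℕ) (k : List ℕ) : MHS N k = MHS' N k.length k.get := rfl

lemma sigma_mk_eq {r : ℕ} {m m' : ℕ} (f : Fin r → Fin m) (g : Fin r → Fin m')
    (h : m = m') (h2 : ∀ i, (f i : ℕ) = (g i : ℕ)) :
    (⟨m, f⟩ : Σ m : ℕ, Fin r → Fin m) = ⟨m', g⟩ := by
  subst h
  simp only [Sigma.mk.inj_iff, heq_eq_eq, true_and]
  funext i
  exact Fin.ext (h2 i)

lemma MHS'_snoc (N r : ℕ) (κ : Fin (r+1) → ℕ) :
    MHS' N (r+1) κ = ∑ m ∈ Finset.Ico 1 N,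
      (1 / (m:ℝ)^(κ (Fin.last r))) * MHS' m r (κ ∘ Fin.castSucc) := by
  unfold MHS'
  simp only [Finset.mul_sum]
  symm
  rw [Finset.sum_sigma']
  apply Finset.sum_bij'
    (i := fun (p : Σ m : ℕ, Fin r → Fin m) hp =>
      Fin.snoc (fun j => (⟨(p.2 j : ℕ), by
        have h1 : p.1 ∈ Finset.Ico 1 N := (Finset.mem_sigma.mp hp).1
        have := (p.2 j).2
        have := (Finset.mem_Ico.mp h1).2
        omega⟩ : Fin N))
        ⟨p.1, by
          have h1 : p.1 ∈ Finset.Ico 1 N := (Finset.mem_sigma.mp hp).1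
          exact (Finset.mem_Ico.mp h1).2⟩)
    (j := fun (n : Fin (r+1) → Fin N) hn =>
      ⟨(n (Fin.last r) : ℕ), fun i => ⟨(n (Fin.castSucc i) : ℕ), by
        have hsm : StrictMono n := (Finset.mem_filter.mp hn).2.2
        exact hsm (Fin.castSucc_lt_last i)⟩⟩)
  case hi =>
    intro p hp
    obtain ⟨h1, h2⟩ := Finset.mem_sigma.mp hp
    obtain ⟨-, hpos, hsm⟩ := Finset.mem_filter.mp h2
    rw [Finset.mem_filter]
    refine ⟨Finset.mem_univ _, ?_, ?_⟩
    · intro i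
      refine Fin.lastCases ?_ (fun j => ?_) i
      · simp only [Fin.snoc_last]
        exact (Finset.mem_Ico.mp h1).1
      · simp only [Fin.snoc_castSucc]
        exact hpos j
    · intro i j hij
      refine Fin.lastCases (fun hji => ?_) (fun i' hij' => ?_) i hij
      · exact absurd hji (not_lt_of_ge (Fin.le_last _))
      refine Fin.lastCases ?_ (fun j' => ?_) j hij'
      · intro _
        simp only [Fin.snoc_castSucc, Fin.snoc_last]
        exact (p.2 i').2
      · intro hij2
        simp only [Fin.snoc_castSucc]
        have : i' < j' := by
          simpa [Fin.castSucc_lt_castSucc_iff] using hij2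
        exact hsm this
  case hj =>
    intro n hn
    obtain ⟨-, hpos, hsm⟩ := Finset.mem_filter.mp hn
    rw [Finset.mem_sigma]
    constructor
    · rw [Finset.mem_Ico]
      exact ⟨hpos _, (n (Fin.last r)).2⟩
    · rw [Finset.mem_filter]
      refine ⟨Finset.mem_univ _, fun i => hpos _, fun i j hij => ?_⟩
      simpa using hsm (Fin.castSucc_lt_castSucc_iff.mpr hij)
  case left_neg =>
    intro p hp
    apply sigma_mk_eq
    · simp [Fin.snoc_last]
    · intro i
      simp [Fin.snoc_castSucc]
  case right_neg =>
    intro n hn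
    funext i
    refine Fin.lastCases ?_ (fun j => ?_) i
    · simp [Fin.snoc_last]
    · simp [Fin.snoc_castSucc]
  case h =>
    intro p hp
    rw [Fin.prod_univ_castSucc]
    simp only [Fin.snoc_castSucc, Fin.snoc_last, Function.comp]
    ring

lemma MHS'_congr {N r r' : ℕ} (h : r = r') (κ : Fin r → ℕ) (κ' : Fin r' → ℕ)
    (hκ : ∀ i : Fin r, κ i = κ' (Fin.cast h i)) : MHS' N r κ = MHS' N r' κ' := by
  subst h
  congr 1
  funext i
  exact hκ i

lemma MHS_snoc (N : ℕ) (k : List ℕ) (a : ℕ) :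
    MHS N (k ++ [a]) = ∑ m ∈ Finset.Ico 1 N, (1/(m:ℝ)^a) * MHS m k := by
  have h : (k ++ [a]).length = k.length + 1 := by simp
  have e1 : MHS N (k ++ [a])
      = MHS' N (k.length+1) (fun i => (k++[a]).get (Fin.cast h.symm i)) := by
    rw [MHS_eq_MHS']
    exact MHS'_congr h _ _ (fun i => rfl)
  rw [e1, MHS'_snoc]
  apply Finset.sum_congr rfl
  intro m _
  congr 1
  · have hx : ((k++[a]).get (Fin.cast h.symm (Fin.last k.length))) = a := by
      simp [List.get_eq_getElem]
    rw [hx]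
  · rw [MHS_eq_MHS']
    apply MHS'_congr rfl
    intro i
    show (k++[a]).get (Fin.cast h.symm (Fin.castSucc i)) = k.get i
    simp [List.get_eq_getElem, List.getElem_append_left i.2]

lemma S_eq_MHS : ∀ (w : List ℕ) (N : ℕ), S w N = MHS N w.reverse := by
  intro w
  induction w with
  | nil =>
    intro N
    simp only [S_nil, List.reverse_nil]
    unfold MHS
    rw [Finset.filter_true_of_mem]
    · simp
    · intro n _
      exact ⟨fun i => i.elim0, fun i => i.elim0⟩
  | cons a w ih =>
    intro N
    rw [S_cons, List.reverse_cons, MHS_snoc]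
    exact Finset.sum_congr rfl fun m _ => by rw [ih]

lemma ZN_harmW (N : ℕ) (w w' : List ℕ) : ZN N (harmW w w') = MHS N w * MHS N w' := by
  unfold ZN harmW
  rw [Finsupp.sum_mapDomain_index_inj List.reverse_injective]
  have e : (stR w.reverse w'.reverse).sum (fun u (q : ℚ) => (q:ℝ) * MHS N u.reverse)
      = ZR N (stR w.reverse w'.reverse) := by
    apply Finsupp.sum_congr
    intro u _
    rw [S_eq_MHS]
  rw [e, main_lem _ _ _ le_rfl N, S_eq_MHS, S_eq_MHS, List.reverse_reverse,
    List.reverse_reverse]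

noncomputable def ZNhom (N : ℕ) : (List ℕ →₀ ℚ) →+ ℝ :=
  Finsupp.liftAddHom fun w =>
    (AddMonoidHom.mulRight (MHS N w)).comp (Rat.castHom ℝ).toAddMonoidHom

lemma ZN_eq_hom (N : ℕ) (h : List ℕ →₀ ℚ) : ZN N h = ZNhom N h := by
  simp only [ZNhom, Finsupp.liftAddHom_apply, ZN]
  rfl

/-- `Z_N` is an algebra homomorphism for the harmonic product:
`Z_N(w * w') = Z_N(w)·Z_N(w')` for all `w, w' ∈ 𝔥¹`. -/
theorem stmt_7 (N : ℕ) (f g : List ℕ →₀ ℚ) (hf : MemH1 f) (hg : MemH1 g) :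
    ZN N (harmLin f g) = ZN N f * ZN N g := by
  rw [ZN_eq_hom, harmLin, map_finsuppSum]
  have e : ∀ w : List ℕ,
      (fun q : ℚ => (ZNhom N) (g.sum fun w' q' => (q * q') • harmW w w'))
      = fun q : ℚ => g.sum fun w' q' => (q:ℝ) * (q':ℝ) * (MHS N w * MHS N w') := by
    intro w
    funext q
    rw [map_finsuppSum]
    apply Finsupp.sum_congr
    intro w' _
    rw [map_rat_smul, ← ZN_eq_hom, ZN_harmW, Rat.smul_def]
    push_cast
    ring
  rw [show (f.sum fun w q => (ZNhom N) (g.sum fun w' q' => (q * q') • harmW w w'))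
      = f.sum fun w (q : ℚ) => g.sum fun w' q' => (q:ℝ) * (q':ℝ) * (MHS N w * MHS N w')
    from Finsupp.sum_congr fun w _ => congrFun (e w) _]
  unfold ZN Finsupp.sum
  rw [Finset.sum_mul_sum]
  apply Finset.sum_congr rfl
  intro w _
  apply Finset.sum_congr rfl
  intro w' _
  ring
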